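/- arXiv:2104.08468 — 4 statements merged into one kernel-verified Lean document; each statement's English description precedes it below -/
import Mathlib

section
/- For every real number p there exist constants c₁, c₂ > 0 and T > 1 such that for all t ≥ T one has c₁·2^{-t}/(t-1) ≤ ∫₁^∞ (1+r²)^{-t} r^p dr ≤ c₂·2^{-t}/(t-1). -/
open MeasureTheory Real

noncomputable section

def mlog {n : ℕ} (ξ : EuclideanSpace ℝ (Fin n)) : ℝ := Real.log (1 + ‖ξ‖ ^ 2)

def rho {n : ℕ} (ξ : EuclideanSpace ℝ (Fin n)) : ℝ :=
  min (min ((1/2) * mlog ξ * (1 + mlog ξ)) (1 / (2 * (1 + mlog ξ))))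
    ((1/2) * Real.sqrt (mlog ξ))

def ft {n : ℕ} (f : EuclideanSpace ℝ (Fin n) → ℂ) (ξ : EuclideanSpace ℝ (Fin n)) : ℂ :=
  ∫ x, Complex.exp (-Complex.I * ((inner ℝ x ξ : ℝ) : ℂ)) * f x

def normL1 {n : ℕ} (f : EuclideanSpace ℝ (Fin n) → ℂ) : ℝ := ∫ x, ‖f x‖

def norm11 {n : ℕ} (f : EuclideanSpace ℝ (Fin n) → ℂ) : ℝ :=
  ∫ x, (1 + ‖x‖) * ‖f x‖

def MemL11 {n : ℕ} (f : EuclideanSpace ℝ (Fin n) → ℂ) : Prop :=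
  Integrable f ∧ Integrable (fun x => (1 + ‖x‖) * ‖f x‖)

def Ysq {n : ℕ} (f : EuclideanSpace ℝ (Fin n) → ℂ) (δ : ℝ) : ℝ :=
  ∫ ξ, (1 + mlog ξ) ^ δ * ‖ft f ξ‖ ^ 2

def MemY {n : ℕ} (f : EuclideanSpace ℝ (Fin n) → ℂ) (δ : ℝ) : Prop :=
  Integrable (fun ξ => (1 + mlog ξ) ^ δ * ‖ft f ξ‖ ^ 2)

def IsFourierSol {n : ℕ} (u₀ u₁ : EuclideanSpace ℝ (Fin n) → ℂ)
    (v : ℝ → EuclideanSpace ℝ (Fin n) → ℂ) : Prop :=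
  Measurable (Function.uncurry v) ∧
  ∀ ξ, ContDiff ℝ 2 (fun t => v t ξ) ∧
    (∀ t > (0:ℝ), ((1 + mlog ξ : ℝ) : ℂ) * deriv (deriv (fun s => v s ξ)) t
        + ((mlog ξ * (1 + mlog ξ) : ℝ) : ℂ) * v t ξ + deriv (fun s => v s ξ) t = 0) ∧
    v 0 ξ = ft u₀ ξ ∧ deriv (fun s => v s ξ) 0 = ft u₁ ξ

def PP {n : ℕ} (u₀ u₁ : EuclideanSpace ℝ (Fin n) → ℂ) : ℂ := (∫ x, u₀ x) + ∫ x, u₁ x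

def prof1 {n : ℕ} (u₀ u₁ : EuclideanSpace ℝ (Fin n) → ℂ) (t : ℝ)
    (ξ : EuclideanSpace ℝ (Fin n)) : ℂ :=
  PP u₀ u₁ * ((Real.exp (-(t * (mlog ξ * (1 + mlog ξ)))) : ℝ) : ℂ)

def prof2 {n : ℕ} (u₀ u₁ : EuclideanSpace ℝ (Fin n) → ℂ) (t : ℝ)
    (ξ : EuclideanSpace ℝ (Fin n)) : ℂ :=
  ((Real.exp (-(t / (2 * mlog ξ))) : ℝ) : ℂ) *
    (((Real.sin (Real.sqrt (mlog ξ) * t) / Real.sqrt (mlog ξ) : ℝ) : ℂ) * ft u₁ ξ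
      + ((Real.cos (Real.sqrt (mlog ξ) * t) : ℝ) : ℂ) * ft u₀ ξ)

def I0 {n : ℕ} (u₀ u₁ : EuclideanSpace ℝ (Fin n) → ℂ) (l : ℝ) : ℝ :=
  Real.sqrt (norm11 u₀ ^ 2 + norm11 u₁ ^ 2 + Ysq u₀ (l + 1) + Ysq u₁ l)

/-! For `r ≥ 1` we have `2 r ≤ 1 + r² ≤ 2 r²`, so the integrand is squeezed between
`2^{-t} r^{p-2t}` and `2^{-t} r^{p-t}`. Their integrals over `(1, ∞)` are `2^{-t} / (2t - p - 1)`
and `2^{-t} / (t - p - 1)`, both comparable to `2^{-t} / (t - 1)` once `t` is large compared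
with `|p|`. -/

open Set

section

variable {p t r : ℝ}

lemma one_add_sq_rpow_neg_mul_rpow_le (hr : 0 < r) (ht : 0 ≤ t) :
    (1 + r ^ 2) ^ (-t) * r ^ p ≤ 2 ^ (-t) * r ^ (p - t) := by
  have h : (1 + r ^ 2) ^ (-t) ≤ (2 * r) ^ (-t) :=
    rpow_le_rpow_of_nonpos (by positivity) (by nlinarith [two_mul_le_add_sq 1 r]) (by linarith)
  calc (1 + r ^ 2) ^ (-t) * r ^ p ≤ (2 * r) ^ (-t) * r ^ p := by gcongr
    _ = 2 ^ (-t) * r ^ (p - t) := by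
      rw [mul_rpow zero_le_two hr.le, mul_assoc, ← rpow_add hr, neg_add_eq_sub]

lemma two_rpow_neg_mul_rpow_le_one_add_sq_rpow_neg_mul_rpow (hr : 1 ≤ r) (ht : 0 ≤ t) :
    2 ^ (-t) * r ^ (p - 2 * t) ≤ (1 + r ^ 2) ^ (-t) * r ^ p := by
  have hr0 : 0 < r := one_pos.trans_le hr
  have h : (2 * r ^ 2) ^ (-t) ≤ (1 + r ^ 2) ^ (-t) :=
    rpow_le_rpow_of_nonpos (by positivity) (by nlinarith) (by linarith)
  calc 2 ^ (-t) * r ^ (p - 2 * t) = (2 * r ^ 2) ^ (-t) * r ^ p := by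
        rw [mul_rpow zero_le_two (by positivity), ← rpow_two, ← rpow_mul hr0.le, mul_assoc,
          ← rpow_add hr0]
        ring_nf
    _ ≤ (1 + r ^ 2) ^ (-t) * r ^ p := by gcongr

lemma integrableOn_one_add_sq_rpow_neg_mul_rpow (ht : 0 ≤ t) (hpt : p - t < -1) :
    IntegrableOn (fun r : ℝ => (1 + r ^ 2) ^ (-t) * r ^ p) (Ioi 1) := by
  refine Integrable.mono' ((integrableOn_Ioi_rpow_of_lt hpt one_pos).const_mul (2 ^ (-t)))
    (by fun_prop : Measurable fun r : ℝ => (1 + r ^ 2) ^ (-t) * r ^ p).aestronglyMeasurable ?_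
  filter_upwards [ae_restrict_mem measurableSet_Ioi] with r (hr : 1 < r)
  rw [Real.norm_of_nonneg (by positivity)]
  exact one_add_sq_rpow_neg_mul_rpow_le (one_pos.trans hr) ht

lemma integral_Ioi_one_const_mul_rpow (c : ℝ) {s : ℝ} (hs : s < -1) :
    ∫ r in Ioi (1 : ℝ), c * r ^ s = c / (-s - 1) := by
  rw [integral_const_mul, integral_Ioi_rpow_of_lt hs one_pos, Real.one_rpow, neg_div,
    ← div_neg, neg_add', div_eq_mul_one_div c]

lemma integral_Ioi_one_add_sq_rpow_neg_mul_rpow_le (ht : 0 ≤ t) (hpt : p - t < -1) :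
    ∫ r in Ioi (1 : ℝ), (1 + r ^ 2) ^ (-t) * r ^ p ≤ 2 ^ (-t) / (t - p - 1) :=
  calc ∫ r in Ioi (1 : ℝ), (1 + r ^ 2) ^ (-t) * r ^ p
      ≤ ∫ r in Ioi (1 : ℝ), 2 ^ (-t) * r ^ (p - t) :=
        setIntegral_mono_on (integrableOn_one_add_sq_rpow_neg_mul_rpow ht hpt)
          ((integrableOn_Ioi_rpow_of_lt hpt one_pos).const_mul _) measurableSet_Ioi
          fun r (hr : 1 < r) => one_add_sq_rpow_neg_mul_rpow_le (one_pos.trans hr) ht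
    _ = 2 ^ (-t) / (t - p - 1) := by
        rw [integral_Ioi_one_const_mul_rpow _ hpt]; ring_nf

lemma div_le_integral_Ioi_one_add_sq_rpow_neg_mul_rpow (ht : 0 ≤ t) (hpt : p - t < -1) :
    2 ^ (-t) / (2 * t - p - 1) ≤ ∫ r in Ioi (1 : ℝ), (1 + r ^ 2) ^ (-t) * r ^ p := by
  have hpt' : p - 2 * t < -1 := by linarith
  calc 2 ^ (-t) / (2 * t - p - 1) = ∫ r in Ioi (1 : ℝ), 2 ^ (-t) * r ^ (p - 2 * t) := by
        rw [integral_Ioi_one_const_mul_rpow _ hpt']; ring_nf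
    _ ≤ ∫ r in Ioi (1 : ℝ), (1 + r ^ 2) ^ (-t) * r ^ p :=
        setIntegral_mono_on ((integrableOn_Ioi_rpow_of_lt hpt' one_pos).const_mul _)
          (integrableOn_one_add_sq_rpow_neg_mul_rpow ht hpt) measurableSet_Ioi
          fun r (hr : 1 < r) => two_rpow_neg_mul_rpow_le_one_add_sq_rpow_neg_mul_rpow hr.le ht

end

theorem integral_Ioi_rpow_asymptotics (p : ℝ) :
    ∃ c₁ c₂ T : ℝ, 0 < c₁ ∧ 0 < c₂ ∧ 1 < T ∧ ∀ t ≥ T,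
      c₁ * ((2:ℝ) ^ (-t) / (t - 1)) ≤ (∫ r in Set.Ioi (1:ℝ), (1 + r ^ 2) ^ (-t) * r ^ p) ∧
      (∫ r in Set.Ioi (1:ℝ), (1 + r ^ 2) ^ (-t) * r ^ p) ≤ c₂ * ((2:ℝ) ^ (-t) / (t - 1)) := by
  have hp := abs_nonneg p
  refine ⟨1 / 3, 2, 2 * |p| + 3, by norm_num, by norm_num, by linarith, fun t ht => ?_⟩
  have hp₁ := le_abs_self p
  have hp₂ := neg_abs_le p
  have ht₀ : 0 ≤ t := by linarith
  have hpt : p - t < -1 := by linarith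
  constructor
  · calc 1 / 3 * (2 ^ (-t) / (t - 1)) = 2 ^ (-t) / (3 * (t - 1)) := by field_simp
      _ ≤ 2 ^ (-t) / (2 * t - p - 1) := by gcongr <;> linarith
      _ ≤ _ := div_le_integral_Ioi_one_add_sq_rpow_neg_mul_rpow ht₀ hpt
  · calc _ ≤ 2 ^ (-t) / (t - p - 1) := integral_Ioi_one_add_sq_rpow_neg_mul_rpow_le ht₀ hpt
      _ ≤ 2 ^ (-t) / ((t - 1) / 2) := by gcongr <;> linarith
      _ = 2 * (2 ^ (-t) / (t - 1)) := by field_simp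
end
end

section
/- Let n ≥ 1, ξ ∈ ℝⁿ, and let a, b ∈ ℂ. Set E₀ := (1+m(ξ))|b|²/2 + m(ξ)(1+m(ξ))|a|²/2 and E := E₀ + ρ(ξ)(1+m(ξ))·Re(b·conj(a)) + (ρ(ξ)/2)|a|². Then (1/2)·E₀ ≤ E ≤ 3·E₀. -/
open MeasureTheory Real

noncomputable section

/-!
With `E₀ = (1 + m) (|b|² + m |a|²) / 2`, both correction terms are at most `E₀ / 2` in size.
The cross term is controlled by `ρ ≤ √m / 2` and AM-GM, `2 √m |a| |b| ≤ |b|² + m |a|²`;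
the nonnegative term `ρ |a|² / 2` by `ρ ≤ m (1 + m) / 2`. Hence `E₀ / 2 ≤ E ≤ 2 E₀`.
-/

lemma mlog_nonneg {n : ℕ} (ξ : EuclideanSpace ℝ (Fin n)) : 0 ≤ mlog ξ :=
  Real.log_nonneg (le_add_of_nonneg_right (sq_nonneg ‖ξ‖))

lemma rho_nonneg {n : ℕ} (ξ : EuclideanSpace ℝ (Fin n)) : 0 ≤ rho ξ := by
  have := mlog_nonneg ξ
  exact le_min (le_min (by positivity) (by positivity)) (by positivity)

lemma rho_le_half_sqrt_mlog {n : ℕ} (ξ : EuclideanSpace ℝ (Fin n)) :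
    rho ξ ≤ √(mlog ξ) / 2 := by
  unfold rho
  exact (min_le_right _ _).trans_eq (by ring)

lemma rho_le_half_mlog_mul {n : ℕ} (ξ : EuclideanSpace ℝ (Fin n)) :
    rho ξ ≤ mlog ξ * (1 + mlog ξ) / 2 := by
  unfold rho
  exact (min_le_left _ _).trans ((min_le_left _ _).trans_eq (by ring))

lemma Complex.abs_re_mul_conj_le (a b : ℂ) :
    |(b * (starRingEnd ℂ) a).re| ≤ ‖b‖ * ‖a‖ := by
  simpa only [norm_mul, Complex.norm_conj] using Complex.abs_re_le_norm (b * (starRingEnd ℂ) a)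

section EnergyBounds

variable {m ρ r A B : ℝ}

lemma cross_term_le (hm : 0 ≤ m) (hρ₀ : 0 ≤ ρ) (hρ : ρ ≤ √m / 2) (hr : |r| ≤ B * A) :
    |ρ * (1 + m) * r| ≤ ((1 + m) * B ^ 2 / 2 + m * (1 + m) * A ^ 2 / 2) / 2 := by
  have hm₁ : 0 ≤ 1 + m := by linarith
  have am_gm : 2 * (√m * A) * B ≤ (√m * A) ^ 2 + B ^ 2 := two_mul_le_add_sq _ _
  rw [mul_pow, Real.sq_sqrt hm] at am_gm
  calc |ρ * (1 + m) * r| = ρ * (1 + m) * |r| := by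
        rw [abs_mul, abs_of_nonneg (mul_nonneg hρ₀ hm₁)]
    _ ≤ √m / 2 * (1 + m) * (B * A) := by gcongr
    _ ≤ _ := by nlinarith [mul_le_mul_of_nonneg_left am_gm hm₁]

lemma damping_term_le (hm : 0 ≤ m) (hρ : ρ ≤ m * (1 + m) / 2) :
    ρ / 2 * A ^ 2 ≤ ((1 + m) * B ^ 2 / 2 + m * (1 + m) * A ^ 2 / 2) / 2 := by
  have : ρ / 2 * A ^ 2 ≤ m * (1 + m) / 2 / 2 * A ^ 2 := by gcongr
  nlinarith [sq_nonneg B]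

lemma perturbed_energy_bounds (hm : 0 ≤ m) (hρ₀ : 0 ≤ ρ) (hρs : ρ ≤ √m / 2)
    (hρm : ρ ≤ m * (1 + m) / 2) (hr : |r| ≤ B * A) :
    (1/2) * ((1 + m) * B ^ 2 / 2 + m * (1 + m) * A ^ 2 / 2) ≤
      ((1 + m) * B ^ 2 / 2 + m * (1 + m) * A ^ 2 / 2) + ρ * (1 + m) * r + (ρ / 2) * A ^ 2 ∧
    ((1 + m) * B ^ 2 / 2 + m * (1 + m) * A ^ 2 / 2) + ρ * (1 + m) * r + (ρ / 2) * A ^ 2 ≤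
      3 * ((1 + m) * B ^ 2 / 2 + m * (1 + m) * A ^ 2 / 2) := by
  have hcross := abs_le.mp (cross_term_le hm hρ₀ hρs hr)
  have hdamp := damping_term_le (A := A) (B := B) hm hρm
  have hdamp₀ : 0 ≤ ρ / 2 * A ^ 2 := by positivity
  constructor <;> linarith

end EnergyBounds

theorem energy_equivalence_general (n : ℕ) (ξ : EuclideanSpace ℝ (Fin n)) (a b : ℂ) :
    (1/2) * ((1 + mlog ξ) * ‖b‖ ^ 2 / 2
        + mlog ξ * (1 + mlog ξ) * ‖a‖ ^ 2 / 2) ≤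
      ((1 + mlog ξ) * ‖b‖ ^ 2 / 2
        + mlog ξ * (1 + mlog ξ) * ‖a‖ ^ 2 / 2)
        + rho ξ * (1 + mlog ξ) * (b * (starRingEnd ℂ) a).re
        + (rho ξ / 2) * ‖a‖ ^ 2 ∧
    ((1 + mlog ξ) * ‖b‖ ^ 2 / 2
        + mlog ξ * (1 + mlog ξ) * ‖a‖ ^ 2 / 2)
        + rho ξ * (1 + mlog ξ) * (b * (starRingEnd ℂ) a).re
        + (rho ξ / 2) * ‖a‖ ^ 2 ≤
      3 * ((1 + mlog ξ) * ‖b‖ ^ 2 / 2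
        + mlog ξ * (1 + mlog ξ) * ‖a‖ ^ 2 / 2) :=
  perturbed_energy_bounds (mlog_nonneg ξ) (rho_nonneg ξ) (rho_le_half_sqrt_mlog ξ)
    (rho_le_half_mlog_mul ξ) (Complex.abs_re_mul_conj_le a b)

theorem energy_equivalence (n : ℕ) (hn : 1 ≤ n) (ξ : EuclideanSpace ℝ (Fin n)) (a b : ℂ) :
    (1/2) * ((1 + mlog ξ) * ‖b‖ ^ 2 / 2
        + mlog ξ * (1 + mlog ξ) * ‖a‖ ^ 2 / 2) ≤
      ((1 + mlog ξ) * ‖b‖ ^ 2 / 2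
        + mlog ξ * (1 + mlog ξ) * ‖a‖ ^ 2 / 2)
        + rho ξ * (1 + mlog ξ) * (b * (starRingEnd ℂ) a).re
        + (rho ξ / 2) * ‖a‖ ^ 2 ∧
    ((1 + mlog ξ) * ‖b‖ ^ 2 / 2
        + mlog ξ * (1 + mlog ξ) * ‖a‖ ^ 2 / 2)
        + rho ξ * (1 + mlog ξ) * (b * (starRingEnd ℂ) a).re
        + (rho ξ / 2) * ‖a‖ ^ 2 ≤
      3 * ((1 + mlog ξ) * ‖b‖ ^ 2 / 2
        + mlog ξ * (1 + mlog ξ) * ‖a‖ ^ 2 / 2) :=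
  energy_equivalence_general n ξ a b
end
end

section
/- Let n ≥ 1, let u₀, u₁ ∈ L^{1,1}(ℝⁿ) ∩ L²(ℝⁿ), and let v be a Fourier-space solution of the plate equation with data (u₀, u₁). Then there exist constants C > 0 and T ≥ 1 such that for all t ≥ T: ∫_{|ξ| ≤ η} |v(t,ξ) − φ₁(t,ξ)|² dξ ≤ C·(‖u₀‖²_{1,1} + ‖u₁‖²_{1,1})·t^{-(n+2)/2}. -/
open MeasureTheory Real

noncomputable section

/-!
For fixed `ξ` with `m = log (1 + |ξ|²)` the equation is a damped oscillator whose characteristic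
roots `λ₁ ≈ -m (1 + m)` and `λ₂ ≤ -1/4` are real and well separated when `|ξ| ≤ η`, so `v(t, ξ)`
is an explicit combination of `e^{λ₁ t}` and `e^{λ₂ t}`. Against `φ₁`, the `λ₁`-coefficient
differs from `P₀ + P₁` by `O(|ξ|)` (as `|û(ξ) - û(0)| ≤ |ξ| ‖u‖_{1,1}`), `e^{λ₁ t}` differs from
`e^{-t m (1 + m)}` by `O(m² t) e^{-t m (1 + m)}`, and the `λ₂`-mode decays exponentially. With
`m ≍ |ξ|²` this gives `|v - φ₁| ≲ ‖u‖_{1,1} (|ξ| e^{-t|ξ|²/4} + e^{-t/4})`; squaring and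
integrating the Gaussian yields `t^{-(n+2)/2}`, and the exponential tail is absorbed for large `t`.
-/

open scoped Complex

theorem hasDerivAt_cexp_mul_ofReal (c : ℂ) (t : ℝ) :
    HasDerivAt (fun t : ℝ => cexp (c * t)) (c * cexp (c * t)) t := by
  simpa [mul_comm] using ((hasDerivAt_id t).ofReal_comp.const_mul c).cexp

theorem eq_mul_cexp_of_hasDerivAt {g : ℝ → ℂ} {c : ℂ}
    (hg : ∀ t, 0 ≤ t → HasDerivAt g (c * g t) t) {t : ℝ} (ht : 0 ≤ t) :
    g t = g 0 * cexp (c * t) := by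
  have hderiv : ∀ s, 0 ≤ s →
      HasDerivAt (fun s : ℝ => cexp (-c * s) * g s) 0 s := fun s hs =>
    ((hasDerivAt_cexp_mul_ofReal (-c) s).mul (hg s hs)).congr_deriv (by ring)
  have hconst := constant_of_has_deriv_right_zero
    (fun s hs => (hderiv s hs.1).continuousAt.continuousWithinAt)
    (fun s hs => (hderiv s hs.1).hasDerivWithinAt) t ⟨ht, le_rfl⟩
  simp only [Complex.ofReal_zero, mul_zero, Complex.exp_zero, one_mul] at hconst
  rw [← hconst, mul_right_comm, ← Complex.exp_add]
  simp

theorem eq_exp_combination_of_ode {w : ℝ → ℂ} (hw : ContDiff ℝ 2 w) {l₁ l₂ : ℂ} (hl : l₁ ≠ l₂)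
    (hode : ∀ t > 0, deriv (deriv w) t - (l₁ + l₂) * deriv w t + l₁ * l₂ * w t = 0)
    {t : ℝ} (ht : 0 ≤ t) :
    w t = (w 0 - (deriv w 0 - l₁ * w 0) / (l₂ - l₁)) * cexp (l₁ * t)
      + (deriv w 0 - l₁ * w 0) / (l₂ - l₁) * cexp (l₂ * t) := by
  obtain ⟨hw₁, -, hw'⟩ := contDiff_succ_iff_deriv.mp (show ContDiff ℝ (1 + 1) w from hw)
  obtain ⟨hw₂, hw''⟩ := contDiff_one_iff_deriv.mp hw'
  have hode₀ : Set.EqOn (deriv (deriv w)) (fun t => (l₁ + l₂) * deriv w t - l₁ * l₂ * w t)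
      (Set.Ici 0) := by
    have hEq : Set.EqOn (deriv (deriv w)) (fun t => (l₁ + l₂) * deriv w t - l₁ * l₂ * w t)
        (Set.Ioi 0) := fun t ht => by linear_combination hode t ht
    rw [← closure_Ioi]
    exact hEq.closure hw'' (by fun_prop)
  set B := (deriv w 0 - l₁ * w 0) / (l₂ - l₁)
  -- `w' - l₁ w` solves the first-order equation with rate `l₂`, then `w - B e^{l₂ t}` the one
  -- with rate `l₁`.
  have hz : ∀ t, 0 ≤ t → deriv w t - l₁ * w t = B * (l₂ - l₁) * cexp (l₂ * t) := by
    intro t ht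
    rw [div_mul_cancel₀ _ (sub_ne_zero.mpr hl.symm)]
    refine eq_mul_cexp_of_hasDerivAt (g := fun t => deriv w t - l₁ * w t) (fun s hs => ?_) ht
    refine ((hw₂ s).hasDerivAt.sub ((hw₁ s).hasDerivAt.const_mul l₁)).congr_deriv ?_
    rw [hode₀ (Set.mem_Ici.mpr hs)]; ring
  have hy := eq_mul_cexp_of_hasDerivAt (g := fun t => w t - B * cexp (l₂ * t)) (c := l₁)
    (fun s hs => ((hw₁ s).hasDerivAt.sub
      ((hasDerivAt_cexp_mul_ofReal l₂ s).const_mul B)).congr_deriv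
        (by linear_combination hz s hs)) ht
  simp only [Complex.ofReal_zero, mul_zero, Complex.exp_zero, mul_one] at hy
  linear_combination hy

theorem exists_char_roots {m : ℝ} (hm : 0 ≤ m) (hD : 1 / 4 ≤ 1 - 4 * m * (1 + m) ^ 2) :
    ∃ l₁ l₂ : ℝ, l₁ + l₂ = -(1 + m)⁻¹ ∧ l₁ * l₂ = m ∧ 1 / 4 ≤ l₁ - l₂ ∧ l₂ ≤ -1 / 4 := by
  set s := √(1 - 4 * m * (1 + m) ^ 2)
  have hs : s ^ 2 = 1 - 4 * m * (1 + m) ^ 2 := Real.sq_sqrt (by linarith)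
  have hs₀ : 0 ≤ s := Real.sqrt_nonneg _
  have hm₁ : m ≤ 1 := by nlinarith
  have hs₁ : 1 / 2 ≤ s := by nlinarith
  have hpos : 0 < 1 + m := by linarith
  refine ⟨(-1 + s) / (2 * (1 + m)), (-1 - s) / (2 * (1 + m)), ?_, ?_, ?_, ?_⟩
  · field_simp; ring
  · field_simp; linear_combination -hs
  · rw [← sub_div, le_div_iff₀ (by positivity)]; linarith
  · rw [div_le_iff₀ (by positivity)]; linarith

theorem char_root_bounds {m l₁ l₂ : ℝ} (hm₀ : 0 ≤ m) (hm₁ : m ≤ 1)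
    (hsum : l₁ + l₂ = -(1 + m)⁻¹) (hprod : l₁ * l₂ = m) (hl₂ : l₂ ≤ -1 / 4) :
    l₁ ≤ -(m * (1 + m)) ∧ -(m * (1 + m)) - 32 * m ^ 2 ≤ l₁ ∧
      |l₁| ≤ 4 * m ∧ |1 + l₂ - l₁| ≤ 9 * m := by
  have hpos : 0 < 1 + m := by linarith
  have hl₂' : l₂ = -(1 + m)⁻¹ - l₁ := by linarith
  have hl₁₀ : l₁ ≤ 0 := by nlinarith
  have hl₁ : -(4 * m) ≤ l₁ := by nlinarith
  have hroot : l₁ + m * (1 + m) = -((1 + m) * l₁ ^ 2) := by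
    rw [hl₂'] at hprod; field_simp at hprod; linear_combination -hprod
  have hgap : 1 + l₂ - l₁ = m / (1 + m) - 2 * l₁ := by rw [hl₂']; field_simp; ring
  have hfrac : m / (1 + m) ≤ m := div_le_self hm₀ (by linarith)
  refine ⟨by nlinarith, by nlinarith, abs_le.mpr ⟨by linarith, by linarith⟩,
    abs_le.mpr ⟨by rw [hgap]; nlinarith [div_nonneg hm₀ hpos.le], by rw [hgap]; linarith⟩⟩

section Fourier

variable {n : ℕ} {u : EuclideanSpace ℝ (Fin n) → ℂ}

theorem norm11_nonneg : 0 ≤ norm11 u :=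
  integral_nonneg fun _ => by positivity

theorem norm_cexp_neg_I_mul_inner_sub_one_le (x ξ : EuclideanSpace ℝ (Fin n)) :
    ‖cexp (-Complex.I * ((inner ℝ x ξ : ℝ) : ℂ)) - 1‖ ≤ ‖x‖ * ‖ξ‖ := by
  have h := Real.norm_exp_I_mul_ofReal_sub_one_le (x := -inner ℝ x ξ)
  rw [Complex.ofReal_neg, mul_neg, ← neg_mul, Real.norm_eq_abs, abs_neg] at h
  exact h.trans (abs_real_inner_le_norm x ξ)

theorem integrable_cexp_neg_I_mul_inner_mul (h : Integrable u) (ξ : EuclideanSpace ℝ (Fin n)) :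
    Integrable (fun x => cexp (-Complex.I * ((inner ℝ x ξ : ℝ) : ℂ)) * u x) :=
  h.bdd_mul (c := 1) (by fun_prop) (ae_of_all _ fun x => by
    rw [neg_mul, ← mul_neg, ← Complex.ofReal_neg, Complex.norm_exp_I_mul_ofReal])

theorem norm_ft_le (h : MemL11 u) (ξ : EuclideanSpace ℝ (Fin n)) : ‖ft u ξ‖ ≤ norm11 u :=
  norm_integral_le_of_norm_le h.2 (ae_of_all _ fun x => by
    rw [norm_mul, neg_mul, ← mul_neg, ← Complex.ofReal_neg, Complex.norm_exp_I_mul_ofReal]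
    nlinarith [norm_nonneg x, norm_nonneg (u x)])

theorem norm_ft_sub_integral_le (h : MemL11 u) (ξ : EuclideanSpace ℝ (Fin n)) :
    ‖ft u ξ - ∫ x, u x‖ ≤ ‖ξ‖ * norm11 u := by
  rw [ft, ← integral_sub (integrable_cexp_neg_I_mul_inner_mul h.1 ξ) h.1, norm11,
    ← integral_const_mul]
  refine norm_integral_le_of_norm_le (h.2.const_mul _) (ae_of_all _ fun x => ?_)
  rw [← sub_one_mul, norm_mul]
  have hx := norm_cexp_neg_I_mul_inner_sub_one_le x ξ
  nlinarith [norm_nonneg x, norm_nonneg ξ, norm_nonneg (u x)]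

end Fourier

theorem mlog_le_sq {n : ℕ} (ξ : EuclideanSpace ℝ (Fin n)) : mlog ξ ≤ ‖ξ‖ ^ 2 := by
  have := Real.log_le_sub_one_of_pos (show 0 < 1 + ‖ξ‖ ^ 2 by positivity)
  rw [mlog]; linarith

theorem sq_div_two_le_mlog {n : ℕ} {ξ : EuclideanSpace ℝ (Fin n)} (hξ : ‖ξ‖ ≤ 1) :
    ‖ξ‖ ^ 2 / 2 ≤ mlog ξ := by
  have h := Real.le_log_one_add_of_nonneg (sq_nonneg ‖ξ‖)
  have hξ2 : ‖ξ‖ ^ 2 ≤ 1 := by nlinarith [norm_nonneg ξ]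
  refine le_trans ?_ h
  rw [le_div_iff₀ (by positivity)]
  nlinarith [sq_nonneg ‖ξ‖]

theorem mul_sq_mul_exp_neg_le (t r : ℝ) : t * r ^ 2 * rexp (-(t * r ^ 2 / 4)) ≤ 4 := by
  have h := Real.mul_exp_neg_le_exp_neg_one (t * r ^ 2 / 4)
  have h1 : rexp (-1) ≤ 1 := Real.exp_le_one_iff.mpr (by norm_num)
  linarith

theorem norm_modal_coeffs_le {m r K l₁ l₂ : ℝ} {a₀ a₁ P₀ P₁ : ℂ} (hmr : m ≤ r) (hm₁ : m ≤ 1)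
    (hgap : 1 / 4 ≤ l₁ - l₂) (hl₁ : |l₁| ≤ 4 * m) (hl : |1 + l₂ - l₁| ≤ 9 * m)
    (ha₀ : ‖a₀‖ ≤ K) (ha₁ : ‖a₁‖ ≤ K) (hP₀ : ‖a₀ - P₀‖ ≤ r * K) (hP₁ : ‖a₁ - P₁‖ ≤ r * K) :
    ‖(a₁ - l₁ * a₀) / (l₂ - l₁)‖ ≤ 20 * K ∧
      ‖a₀ - (a₁ - l₁ * a₀) / (l₂ - l₁) - (P₀ + P₁)‖ ≤ 54 * r * K := by
  have hK : 0 ≤ K := (norm_nonneg _).trans ha₀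
  have hm₀ : 0 ≤ m := by linarith [abs_nonneg l₁]
  have hdiv : ∀ z : ℂ, ‖z / ((l₂ : ℂ) - l₁)‖ ≤ 4 * ‖z‖ := fun z => by
    rw [norm_div, ← Complex.ofReal_sub, Complex.norm_real, Real.norm_eq_abs,
      abs_of_neg (by linarith), div_le_iff₀ (by linarith)]
    nlinarith [norm_nonneg z]
  have hl₁a₀ : ‖(l₁ : ℂ) * a₀‖ ≤ 4 * m * K := by
    rw [norm_mul, Complex.norm_real, Real.norm_eq_abs]
    exact mul_le_mul hl₁ ha₀ (norm_nonneg _) (by positivity)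
  constructor
  · refine (hdiv _).trans ?_
    nlinarith [norm_sub_le a₁ ((l₁ : ℂ) * a₀)]
  · have hsplit : a₀ - (a₁ - l₁ * a₀) / (l₂ - l₁) - (P₀ + P₁) = (a₀ - P₀) + (a₁ - P₁)
        - (((1 + l₂ - l₁ : ℝ) : ℂ) * a₁ - l₁ * a₀) / (l₂ - l₁) := by
      have : (l₂ : ℂ) - l₁ ≠ 0 := by
        rw [← Complex.ofReal_sub, Complex.ofReal_ne_zero]; linarith
      field_simp
      push_cast
      ring
    have hnum : ‖((1 + l₂ - l₁ : ℝ) : ℂ) * a₁ - l₁ * a₀‖ ≤ 13 * m * K := by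
      have h := norm_sub_le (((1 + l₂ - l₁ : ℝ) : ℂ) * a₁) ((l₁ : ℂ) * a₀)
      rw [norm_mul, Complex.norm_real, Real.norm_eq_abs] at h
      nlinarith [mul_le_mul hl ha₁ (norm_nonneg _) (by positivity)]
    rw [hsplit]
    refine (norm_sub_le _ _).trans ?_
    nlinarith [norm_add_le (a₀ - P₀) (a₁ - P₁), hdiv (((1 + l₂ - l₁ : ℝ) : ℂ) * a₁ - l₁ * a₀)]

theorem abs_exp_sub_exp_le {m r t l : ℝ} (hr₀ : 0 ≤ r) (hr : r ≤ 1) (hmr : r ^ 2 / 2 ≤ m)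
    (hm : m ≤ r ^ 2) (ht : 0 ≤ t) (hl : l ≤ -(m * (1 + m)))
    (hl' : -(m * (1 + m)) - 32 * m ^ 2 ≤ l) :
    |rexp (l * t) - rexp (-(t * (m * (1 + m))))| ≤ 128 * r * rexp (-(t * r ^ 2 / 4)) := by
  set E := rexp (-(t * (m * (1 + m))))
  set R := rexp (-(t * r ^ 2 / 4))
  have hm₀ : 0 ≤ m := by nlinarith
  have hER : E ≤ R * R := by
    rw [← Real.exp_add, Real.exp_le_exp]; nlinarith
  have hsplit : rexp (l * t) = E * rexp ((l + m * (1 + m)) * t) := by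
    rw [← Real.exp_add]; ring_nf
  -- `1 - e^x ≤ -x` with `x = (l + m(1+m)) t ≥ -32 m² t`
  have hdiff : E - rexp (l * t) ≤ 32 * m ^ 2 * t * E := by
    rw [hsplit]
    nlinarith [Real.add_one_le_exp ((l + m * (1 + m)) * t), Real.exp_pos (-(t * (m * (1 + m)))),
      mul_le_mul_of_nonneg_right hl' ht]
  have hle : rexp (l * t) ≤ E := Real.exp_le_exp.mpr (by nlinarith)
  have hm2 : m ^ 2 ≤ r ^ 4 := by nlinarith
  have hR := mul_sq_mul_exp_neg_le t r
  have hRpos : 0 < R := Real.exp_pos _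
  rw [abs_sub_comm, abs_of_nonneg (by linarith)]
  calc E - rexp (l * t) ≤ 32 * m ^ 2 * t * E := hdiff
    _ ≤ 32 * r ^ 2 * (t * r ^ 2 * R) * R := by
      have := mul_le_mul (mul_le_mul_of_nonneg_right hm2 ht) hER (Real.exp_pos _).le
        (by positivity)
      nlinarith
    _ ≤ 128 * r * R := by
      have hr2 : r ^ 2 ≤ r := by nlinarith
      nlinarith [mul_le_mul_of_nonneg_left hR (by positivity : (0:ℝ) ≤ 32 * r ^ 2 * R)]

theorem norm_modal_sum_sub_profile_le {m r t K l₁ l₂ : ℝ} {a₀ a₁ P₀ P₁ : ℂ}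
    (hr₀ : 0 ≤ r) (hr : r ≤ 1) (hmr : r ^ 2 / 2 ≤ m) (hm : m ≤ r ^ 2) (ht : 0 ≤ t)
    (hsum : l₁ + l₂ = -(1 + m)⁻¹) (hprod : l₁ * l₂ = m) (hgap : 1 / 4 ≤ l₁ - l₂)
    (hl₂ : l₂ ≤ -1 / 4)
    (ha₀ : ‖a₀‖ ≤ K) (ha₁ : ‖a₁‖ ≤ K) (hP₀ : ‖a₀ - P₀‖ ≤ r * K) (hP₁ : ‖a₁ - P₁‖ ≤ r * K) :
    ‖(a₀ - (a₁ - l₁ * a₀) / (l₂ - l₁)) * rexp (l₁ * t)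
        + (a₁ - l₁ * a₀) / (l₂ - l₁) * rexp (l₂ * t)
        - (P₀ + P₁) * rexp (-(t * (m * (1 + m))))‖
      ≤ 600 * K * (r * rexp (-(t * r ^ 2 / 4)) + rexp (-(t / 4))) := by
  have hK : 0 ≤ K := (norm_nonneg _).trans ha₀
  have hm₀ : 0 ≤ m := by nlinarith
  obtain ⟨hl₁, hl₁', habs₁, habs⟩ := char_root_bounds hm₀ (by nlinarith) hsum hprod hl₂
  obtain ⟨hB, hA⟩ := norm_modal_coeffs_le (by nlinarith) (by nlinarith) hgap habs₁ habs
    ha₀ ha₁ hP₀ hP₁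
  set B := (a₁ - l₁ * a₀) / (l₂ - l₁)
  set E₁ := rexp (l₁ * t)
  set E := rexp (-(t * (m * (1 + m))))
  set R := rexp (-(t * r ^ 2 / 4))
  have hP : ‖P₀ + P₁‖ ≤ 4 * K := by
    have : P₀ + P₁ = a₀ + a₁ - (a₀ - P₀) - (a₁ - P₁) := by ring
    rw [this]
    nlinarith [norm_sub_le (a₀ + a₁ - (a₀ - P₀)) (a₁ - P₁), norm_sub_le (a₀ + a₁) (a₀ - P₀),
      norm_add_le a₀ a₁]
  have hE₁ : E₁ ≤ R := Real.exp_le_exp.mpr (by nlinarith)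
  have hE : |E₁ - E| ≤ 128 * r * R := abs_exp_sub_exp_le hr₀ hr hmr hm ht hl₁ hl₁'
  have hE₂ : rexp (l₂ * t) ≤ rexp (-(t / 4)) := Real.exp_le_exp.mpr (by nlinarith)
  have hsplit : (a₀ - B) * E₁ + B * rexp (l₂ * t) - (P₀ + P₁) * E
      = (a₀ - B - (P₀ + P₁)) * E₁ + (P₀ + P₁) * ((E₁ - E : ℝ) : ℂ) + B * rexp (l₂ * t) := by
    push_cast; ring
  rw [hsplit]
  refine (norm_add₃_le ..).trans ?_
  simp only [norm_mul, Complex.norm_real, Real.norm_eq_abs,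
    abs_of_pos (show 0 < E₁ from Real.exp_pos _), abs_of_pos (Real.exp_pos _)]
  nlinarith [mul_le_mul hA hE₁ (Real.exp_pos _).le (by positivity),
    mul_le_mul hP hE (abs_nonneg _) (by positivity),
    mul_le_mul hB hE₂ (Real.exp_pos _).le (by positivity),
    mul_nonneg (mul_nonneg hK hr₀) (Real.exp_pos (-(t * r ^ 2 / 4))).le,
    mul_nonneg hK (Real.exp_pos (-(t / 4))).le]

theorem norm_sub_prof1_le {n : ℕ} {u₀ u₁ : EuclideanSpace ℝ (Fin n) → ℂ}
    {v : ℝ → EuclideanSpace ℝ (Fin n) → ℂ} (h0 : MemL11 u₀) (h1 : MemL11 u₁)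
    (hv : IsFourierSol u₀ u₁ v) {ξ : EuclideanSpace ℝ (Fin n)} (hξ : ‖ξ‖ ≤ 1)
    (hD : 1 / 4 ≤ 1 - 4 * mlog ξ * (1 + mlog ξ) ^ 2) {t : ℝ} (ht : 0 ≤ t) :
    ‖v t ξ - prof1 u₀ u₁ t ξ‖ ≤ 600 * (norm11 u₀ + norm11 u₁) *
      (‖ξ‖ * rexp (-(t * ‖ξ‖ ^ 2 / 4)) + rexp (-(t / 4))) := by
  have hm := mlog_le_sq ξ
  have hm' := sq_div_two_le_mlog hξ
  obtain ⟨l₁, l₂, hsum, hprod, hgap, hl₂⟩ :=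
    exists_char_roots (by nlinarith [sq_nonneg ‖ξ‖]) hD
  obtain ⟨hC2, hODE, hv₀, hv₁⟩ := hv.2 ξ
  have hsumC : (l₁ + l₂ : ℂ) = -(1 + mlog ξ : ℂ)⁻¹ := by exact_mod_cast hsum
  have hprodC : (l₁ * l₂ : ℂ) = mlog ξ := by exact_mod_cast hprod
  have hm₀ : (1 + mlog ξ : ℂ) ≠ 0 := by
    exact_mod_cast (by nlinarith [sq_nonneg ‖ξ‖] : 1 + mlog ξ ≠ 0)
  have hrep := eq_exp_combination_of_ode hC2 (l₁ := l₁) (l₂ := l₂)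
    (by exact_mod_cast (by linarith : l₁ ≠ l₂)) (fun s hs => by
      have h := hODE s hs
      push_cast at h
      rw [hsumC, hprodC]
      field_simp
      linear_combination h) ht
  have K₀ : 0 ≤ norm11 u₀ := norm11_nonneg
  have K₁ : 0 ≤ norm11 u₁ := norm11_nonneg
  have key := norm_modal_sum_sub_profile_le (norm_nonneg ξ) hξ hm' hm ht hsum hprod hgap hl₂
    (K := norm11 u₀ + norm11 u₁) (P₀ := ∫ x, u₀ x) (P₁ := ∫ x, u₁ x)
    ((norm_ft_le h0 ξ).trans (by linarith)) ((norm_ft_le h1 ξ).trans (by linarith))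
    ((norm_ft_sub_integral_le h0 ξ).trans (by gcongr; linarith))
    ((norm_ft_sub_integral_le h1 ξ).trans (by gcongr; linarith))
  rw [hrep, hv₀, hv₁, prof1, PP]
  push_cast at key ⊢
  exact key

theorem sq_mul_exp_add_exp_le {t : ℝ} (ht : 0 < t) (r : ℝ) :
    (r * rexp (-(t * r ^ 2 / 4)) + rexp (-(t / 4))) ^ 2
      ≤ 8 * (t⁻¹ * rexp (-(t / 4) * r ^ 2) + rexp (-(t / 2))) := by
  have hR : rexp (-(t * r ^ 2 / 4)) = rexp (-(t / 4) * r ^ 2) := by ring_nf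
  have hF : rexp (-(t / 4)) ^ 2 = rexp (-(t / 2)) := by rw [← Real.exp_nat_mul]; ring_nf
  have htr := mul_sq_mul_exp_neg_le t r
  rw [hR] at htr ⊢
  set R := rexp (-(t / 4) * r ^ 2)
  have hr2R : r ^ 2 * R ≤ 4 * t⁻¹ := by
    rw [le_mul_inv_iff₀ ht]; linarith
  have hRpos : 0 < R := Real.exp_pos _
  calc (r * R + rexp (-(t / 4))) ^ 2 ≤ 2 * ((r * R) ^ 2 + rexp (-(t / 4)) ^ 2) := add_sq_le
    _ = 2 * ((r ^ 2 * R) * R + rexp (-(t / 2))) := by rw [hF]; ring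
    _ ≤ 2 * ((4 * t⁻¹) * R + rexp (-(t / 2))) := by gcongr
    _ ≤ 8 * (t⁻¹ * R + rexp (-(t / 2))) := by nlinarith [Real.exp_pos (-(t / 2))]

theorem sq_norm_sub_prof1_le {n : ℕ} {u₀ u₁ : EuclideanSpace ℝ (Fin n) → ℂ}
    {v : ℝ → EuclideanSpace ℝ (Fin n) → ℂ} (h0 : MemL11 u₀) (h1 : MemL11 u₁)
    (hv : IsFourierSol u₀ u₁ v) {ξ : EuclideanSpace ℝ (Fin n)} (hξ : ‖ξ‖ ≤ 1)
    (hD : 1 / 4 ≤ 1 - 4 * mlog ξ * (1 + mlog ξ) ^ 2) {t : ℝ} (ht : 0 < t) :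
    ‖v t ξ - prof1 u₀ u₁ t ξ‖ ^ 2 ≤ 8 * (600 * (norm11 u₀ + norm11 u₁)) ^ 2 *
      (t⁻¹ * rexp (-(t / 4) * ‖ξ‖ ^ 2) + rexp (-(t / 2))) := by
  have h := pow_le_pow_left₀ (norm_nonneg _) (norm_sub_prof1_le h0 h1 hv hξ hD ht.le) 2
  nlinarith [sq_mul_exp_add_exp_le ht ‖ξ‖, sq_nonneg (600 * (norm11 u₀ + norm11 u₁))]

theorem setIntegral_le_of_le_gaussian {V : Type*} [NormedAddCommGroup V] [InnerProductSpace ℝ V]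
    [FiniteDimensional ℝ V] [MeasurableSpace V] [BorelSpace V] {S : Set V} (hS : MeasurableSet S)
    (hSfin : volume S ≠ ⊤) {f : V → ℝ} {A t : ℝ} (hA : 0 ≤ A) (ht : 0 < t)
    (hf₀ : ∀ x, 0 ≤ f x)
    (hf : ∀ x ∈ S, f x ≤ A * (t⁻¹ * rexp (-(t / 4) * ‖x‖ ^ 2) + rexp (-(t / 2)))) :
    ∫ x in S, f x ≤ A * ((4 * π) ^ (Module.finrank ℝ V / 2 : ℝ)
      * t ^ (-((Module.finrank ℝ V : ℝ) + 2) / 2) + volume.real S * rexp (-(t / 2))) := by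
  set d : ℝ := (Module.finrank ℝ V : ℝ)
  have hgauss := GaussianFourier.integral_rexp_neg_mul_sq_norm (V := V) (by positivity : 0 < t / 4)
  have hg : Integrable (fun x : V => rexp (-(t / 4) * ‖x‖ ^ 2)) :=
    Integrable.of_integral_ne_zero (by rw [hgauss]; positivity)
  have hbound : IntegrableOn (fun x : V => t⁻¹ * rexp (-(t / 4) * ‖x‖ ^ 2) + rexp (-(t / 2))) S :=
    (hg.integrableOn.const_mul _).add (integrableOn_const hSfin)
  have hscale : t⁻¹ * (π / (t / 4)) ^ (d / 2) = (4 * π) ^ (d / 2) * t ^ (-(d + 2) / 2) := by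
    rw [show π / (t / 4) = 4 * π / t by field_simp, Real.div_rpow (by positivity) ht.le,
      show -(d + 2) / 2 = -1 + -(d / 2) by ring, Real.rpow_add ht, Real.rpow_neg_one,
      Real.rpow_neg ht.le]
    ring
  calc ∫ x in S, f x
      ≤ ∫ x in S, A * (t⁻¹ * rexp (-(t / 4) * ‖x‖ ^ 2) + rexp (-(t / 2))) :=
        integral_mono_of_nonneg (ae_of_all _ hf₀) (hbound.const_mul A)
          (ae_restrict_of_forall_mem hS hf)
    _ = A * (t⁻¹ * (∫ x in S, rexp (-(t / 4) * ‖x‖ ^ 2))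
          + volume.real S * rexp (-(t / 2))) := by
        rw [integral_const_mul,
          integral_add (hg.integrableOn.const_mul _) (integrableOn_const hSfin), integral_const_mul,
          setIntegral_const, smul_eq_mul]
    _ ≤ A * (t⁻¹ * (∫ x, rexp (-(t / 4) * ‖x‖ ^ 2)) + volume.real S * rexp (-(t / 2))) := by
        gcongr
        · exact ae_of_all _ fun _ => (Real.exp_pos _).le
        · exact Measure.restrict_le_self
    _ = _ := by rw [hgauss, hscale]

theorem eventually_exp_neg_mul_le_rpow_neg (s : ℝ) {b : ℝ} (hb : 0 < b) :
    ∀ᶠ t in Filter.atTop, rexp (-(b * t)) ≤ t ^ (-s) := by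
  filter_upwards [(tendsto_rpow_mul_exp_neg_mul_atTop_nhds_zero s b hb).eventually_le_const
    one_pos, Filter.eventually_gt_atTop 0] with t ht ht₀
  rw [Real.rpow_neg ht₀.le, ← one_div, le_div_iff₀ (by positivity)]
  simpa [mul_comm] using ht

theorem low_frequency_profile_estimate_general (n : ℕ)
    (u₀ u₁ : EuclideanSpace ℝ (Fin n) → ℂ)
    (h0 : MemL11 u₀) (h1 : MemL11 u₁)
    (v : ℝ → EuclideanSpace ℝ (Fin n) → ℂ) (hv : IsFourierSol u₀ u₁ v)
    (η : ℝ) (hη : η ∈ Set.Ioo (0:ℝ) 1)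
    (hηD : ∀ ξ : EuclideanSpace ℝ (Fin n), ‖ξ‖ ≤ η →
      (1:ℝ) / 4 ≤ 1 - 4 * mlog ξ * (1 + mlog ξ) ^ 2) :
    ∃ C T : ℝ, 0 < C ∧ 1 ≤ T ∧ ∀ t ≥ T,
      (∫ ξ in {ξ : EuclideanSpace ℝ (Fin n) | ‖ξ‖ ≤ η},
          ‖v t ξ - prof1 u₀ u₁ t ξ‖ ^ 2) ≤
        C * (norm11 u₀ ^ 2 + norm11 u₁ ^ 2) * t ^ (-((n:ℝ) + 2) / 2) := by
  rw [show {ξ : EuclideanSpace ℝ (Fin n) | ‖ξ‖ ≤ η} = Metric.closedBall 0 η by ext; simp]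
  set K := norm11 u₀ + norm11 u₁
  set G := (4 * π) ^ ((n : ℝ) / 2)
  set V := volume.real (Metric.closedBall (0 : EuclideanSpace ℝ (Fin n)) η)
  obtain ⟨T, hT⟩ := Filter.eventually_atTop.mp
    (eventually_exp_neg_mul_le_rpow_neg (((n : ℝ) + 2) / 2) one_half_pos)
  refine ⟨16 * 600 ^ 2 * (G + V), max T 1, by positivity, le_max_right _ _, fun t ht => ?_⟩
  have ht₀ : 0 < t := one_pos.trans_le (le_of_max_le_right ht)
  have hdecay : rexp (-(t / 2)) ≤ t ^ (-((n : ℝ) + 2) / 2) := by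
    convert hT t (le_of_max_le_left ht) using 2 <;> ring
  have hint := setIntegral_le_of_le_gaussian measurableSet_closedBall
    measure_closedBall_lt_top.ne (by positivity) ht₀ (fun _ => by positivity) fun ξ hξ =>
      have hξ : ‖ξ‖ ≤ η := mem_closedBall_zero_iff.mp hξ
      sq_norm_sub_prof1_le h0 h1 hv (hξ.trans hη.2.le) (hηD ξ hξ) ht₀
  rw [finrank_euclideanSpace_fin] at hint
  calc _ ≤ 8 * (600 * K) ^ 2 * (G * t ^ (-((n : ℝ) + 2) / 2) + V * rexp (-(t / 2))) := hint
    _ ≤ 8 * (600 * K) ^ 2 * ((G + V) * t ^ (-((n : ℝ) + 2) / 2)) := by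
        rw [add_mul]; gcongr
    _ ≤ 16 * 600 ^ 2 * (G + V) * (norm11 u₀ ^ 2 + norm11 u₁ ^ 2) * t ^ (-((n : ℝ) + 2) / 2) := by
        have := add_sq_le (a := norm11 u₀) (b := norm11 u₁)
        have : 0 ≤ (G + V) * t ^ (-((n : ℝ) + 2) / 2) := by positivity
        nlinarith

theorem low_frequency_profile_estimate (n : ℕ) (hn : 1 ≤ n)
    (u₀ u₁ : EuclideanSpace ℝ (Fin n) → ℂ)
    (h0 : MemL11 u₀) (h1 : MemL11 u₁)
    (h0L2 : MemLp u₀ 2) (h1L2 : MemLp u₁ 2)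
    (v : ℝ → EuclideanSpace ℝ (Fin n) → ℂ) (hv : IsFourierSol u₀ u₁ v)
    (η : ℝ) (hη : η ∈ Set.Ioo (0:ℝ) 1)
    (hηD : ∀ ξ : EuclideanSpace ℝ (Fin n), ‖ξ‖ ≤ η →
      (1:ℝ) / 4 ≤ 1 - 4 * mlog ξ * (1 + mlog ξ) ^ 2) :
    ∃ C T : ℝ, 0 < C ∧ 1 ≤ T ∧ ∀ t ≥ T,
      (∫ ξ in {ξ : EuclideanSpace ℝ (Fin n) | ‖ξ‖ ≤ η},
          ‖v t ξ - prof1 u₀ u₁ t ξ‖ ^ 2) ≤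
        C * (norm11 u₀ ^ 2 + norm11 u₁ ^ 2) * t ^ (-((n:ℝ) + 2) / 2) :=
  low_frequency_profile_estimate_general n u₀ u₁ h0 h1 v hv η hη hηD
end
end

section
/- Let n ≥ 1, l ≥ 0, and let u₀ ∈ Y^{l+1} ∩ L¹(ℝⁿ) and u₁ ∈ Y^{l} ∩ L¹(ℝⁿ). Then there exists a constant C > 0, independent of u₀, u₁ and t, such that for all t > 0: ∫_{ℝⁿ} |φ₂(t,ξ)|² dξ ≤ C·(‖u₀‖²_{Y^{l+1}} + ‖u₁‖²_{Y^{l}})·t^{-(l+1)}. -/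
open MeasureTheory Real

noncomputable section

open scoped Nat

/-! At a frequency with `m = mlog ξ > 0` the profile is bounded by `e^{-t/(2m)}` times
`|û₁|/√m + |û₀|`, and the polynomial bound `e^{-s} ≤ ⌈p⌉! s^{-p}` with `s = t/m`, `p = l + 1`
trades the exponential for `m^{l+1} t^{-(l+1)}`; the extra `1/m` in front of `|û₁|²` costs one
power of `m`. Since `m ≤ 1 + m`, integrating gives the `Y^{l+1}` norm of `u₀` and the `Y^l`
norm of `u₁`. The frequency `ξ = 0`, where `m = 0`, is a null set because `n ≥ 1`. -/

lemma rpow_le_factorial_ceil_mul_exp {p s : ℝ} (hp : 0 ≤ p) (hs : 0 ≤ s) :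
    s ^ p ≤ ⌈p⌉₊ ! * exp s := by
  have hfact : (1 : ℝ) ≤ ⌈p⌉₊ ! := Nat.one_le_cast.mpr (Nat.factorial_pos _)
  rcases le_or_gt s 1 with hs1 | hs1
  · calc s ^ p ≤ 1 := rpow_le_one hs hs1 hp
      _ ≤ ⌈p⌉₊ ! * exp s := one_le_mul_of_one_le_of_one_le hfact (one_le_exp hs)
  · calc s ^ p ≤ s ^ (⌈p⌉₊ : ℝ) := rpow_le_rpow_of_exponent_le hs1.le (Nat.le_ceil p)
      _ = s ^ ⌈p⌉₊ := rpow_natCast s _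
      _ ≤ ⌈p⌉₊ ! * exp s := by
        rw [← div_le_iff₀' (by positivity)]
        exact pow_div_factorial_le_exp s hs _

lemma exp_neg_le_factorial_ceil_mul_rpow_neg {p s : ℝ} (hp : 0 ≤ p) (hs : 0 < s) :
    exp (-s) ≤ ⌈p⌉₊ ! * s ^ (-p) := by
  rw [exp_neg, rpow_neg hs.le, ← div_eq_mul_inv, inv_le_iff_one_le_mul₀' (exp_pos s),
    mul_div_assoc', le_div_iff₀ (by positivity), one_mul, mul_comm]
  exact rpow_le_factorial_ceil_mul_exp hp hs.le

lemma exp_neg_div_le {p m t : ℝ} (hp : 0 ≤ p) (hm : 0 < m) (ht : 0 < t) :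
    exp (-(t / m)) ≤ ⌈p⌉₊ ! * m ^ p * t ^ (-p) :=
  calc exp (-(t / m)) ≤ ⌈p⌉₊ ! * (t / m) ^ (-p) :=
        exp_neg_le_factorial_ceil_mul_rpow_neg hp (div_pos ht hm)
    _ = ⌈p⌉₊ ! * m ^ p * t ^ (-p) := by
        rw [rpow_neg (div_pos ht hm).le, div_rpow ht.le hm.le, inv_div, rpow_neg ht.le]
        ring

lemma norm_sq_damped_oscillation_le {m t : ℝ} (hm : 0 < m) (a b : ℂ) :
    ‖((exp (-(t / (2 * m))) : ℝ) : ℂ) *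
        (((sin (√m * t) / √m : ℝ) : ℂ) * a + ((cos (√m * t) : ℝ) : ℂ) * b)‖ ^ 2 ≤
      2 * exp (-(t / m)) * (‖a‖ ^ 2 / m + ‖b‖ ^ 2) := by
  set E := exp (-(t / (2 * m)))
  set S := sin (√m * t) / √m
  set c := cos (√m * t)
  have hE : E ^ 2 = exp (-(t / m)) := by
    rw [← exp_nat_mul]
    congr 1
    field_simp
    ring
  have hS : S ^ 2 ≤ 1 / m := by
    rw [div_pow, sq_sqrt hm.le]
    gcongr
    exact sin_sq_le_one _
  have hnorm : ‖(E : ℂ) * ((S : ℂ) * a + (c : ℂ) * b)‖ ≤ E * (|S| * ‖a‖ + |c| * ‖b‖) := by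
    rw [norm_mul, Complex.norm_real, norm_of_nonneg (exp_pos _).le]
    gcongr
    refine (norm_add_le _ _).trans_eq ?_
    simp only [norm_mul, Complex.norm_real, norm_eq_abs]
  calc ‖(E : ℂ) * ((S : ℂ) * a + (c : ℂ) * b)‖ ^ 2
      ≤ (E * (|S| * ‖a‖ + |c| * ‖b‖)) ^ 2 := pow_le_pow_left₀ (norm_nonneg _) hnorm 2
    _ ≤ E ^ 2 * (2 * (S ^ 2 * ‖a‖ ^ 2 + c ^ 2 * ‖b‖ ^ 2)) := by
        rw [mul_pow]
        gcongr
        nlinarith [sq_nonneg (|S| * ‖a‖ - |c| * ‖b‖), sq_abs S, sq_abs c]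
    _ ≤ E ^ 2 * (2 * (1 / m * ‖a‖ ^ 2 + 1 * ‖b‖ ^ 2)) := by
        gcongr
        exact cos_sq_le_one _
    _ = 2 * exp (-(t / m)) * (‖a‖ ^ 2 / m + ‖b‖ ^ 2) := by
        rw [hE]
        ring

lemma mlog_pos {n : ℕ} {ξ : EuclideanSpace ℝ (Fin n)} (hξ : ξ ≠ 0) : 0 < mlog ξ :=
  log_pos (by have := norm_pos_iff.mpr hξ; nlinarith)

lemma norm_prof2_sq_le {n : ℕ} (u₀ u₁ : EuclideanSpace ℝ (Fin n) → ℂ) {l t : ℝ} (hl : 0 ≤ l)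
    (ht : 0 < t) {ξ : EuclideanSpace ℝ (Fin n)} (hξ : ξ ≠ 0) :
    ‖prof2 u₀ u₁ t ξ‖ ^ 2 ≤ 2 * ⌈l + 1⌉₊ ! * t ^ (-(l + 1)) *
      ((1 + mlog ξ) ^ (l + 1) * ‖ft u₀ ξ‖ ^ 2 + (1 + mlog ξ) ^ l * ‖ft u₁ ξ‖ ^ 2) := by
  have hm := mlog_pos hξ
  set m := mlog ξ
  set K : ℝ := ↑(⌈l + 1⌉₊ !)
  set T := t ^ (-(l + 1))
  have hdecay : exp (-(t / m)) ≤ K * m ^ (l + 1) * T := exp_neg_div_le (by linarith) hm ht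
  have hdecay' : exp (-(t / m)) / m ≤ K * m ^ l * T :=
    calc exp (-(t / m)) / m ≤ K * m ^ (l + 1) * T / m := by gcongr
      _ = K * m ^ l * T := by
        rw [rpow_add_one hm.ne']
        field_simp
  have hml : m ^ l ≤ (1 + m) ^ l := rpow_le_rpow hm.le (by linarith) hl
  have hml1 : m ^ (l + 1) ≤ (1 + m) ^ (l + 1) := rpow_le_rpow hm.le (by linarith) (by linarith)
  calc ‖prof2 u₀ u₁ t ξ‖ ^ 2 ≤ 2 * exp (-(t / m)) * (‖ft u₁ ξ‖ ^ 2 / m + ‖ft u₀ ξ‖ ^ 2) :=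
        norm_sq_damped_oscillation_le hm _ _
    _ = 2 * (exp (-(t / m)) / m * ‖ft u₁ ξ‖ ^ 2 + exp (-(t / m)) * ‖ft u₀ ξ‖ ^ 2) := by ring
    _ ≤ 2 * (K * m ^ l * T * ‖ft u₁ ξ‖ ^ 2 + K * m ^ (l + 1) * T * ‖ft u₀ ξ‖ ^ 2) := by gcongr
    _ ≤ 2 * (K * (1 + m) ^ l * T * ‖ft u₁ ξ‖ ^ 2
          + K * (1 + m) ^ (l + 1) * T * ‖ft u₀ ξ‖ ^ 2) := by gcongr
    _ = 2 * K * T * ((1 + m) ^ (l + 1) * ‖ft u₀ ξ‖ ^ 2 + (1 + m) ^ l * ‖ft u₁ ξ‖ ^ 2) := by ring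

theorem profile2_L2_upper_general (n : ℕ) (hn : 1 ≤ n) (l : ℝ) (hl : 0 ≤ l)
    (u₀ u₁ : EuclideanSpace ℝ (Fin n) → ℂ)
    (h0Y : MemY u₀ (l + 1)) (h1Y : MemY u₁ l) :
    ∃ C : ℝ, 0 < C ∧ ∀ t > (0:ℝ),
      (∫ ξ, ‖prof2 u₀ u₁ t ξ‖ ^ 2) ≤
        C * (Ysq u₀ (l + 1) + Ysq u₁ l) * t ^ (-(l + 1)) := by
  refine ⟨2 * ⌈l + 1⌉₊ !, by positivity, fun t ht => ?_⟩
  have : Nontrivial (EuclideanSpace ℝ (Fin n)) := by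
    have : Nonempty (Fin n) := ⟨⟨0, hn⟩⟩
    infer_instance
  calc (∫ ξ, ‖prof2 u₀ u₁ t ξ‖ ^ 2)
      ≤ ∫ ξ, 2 * ⌈l + 1⌉₊ ! * t ^ (-(l + 1)) *
          ((1 + mlog ξ) ^ (l + 1) * ‖ft u₀ ξ‖ ^ 2 + (1 + mlog ξ) ^ l * ‖ft u₁ ξ‖ ^ 2) := by
        refine integral_mono_of_nonneg (.of_forall fun ξ => by positivity)
          ((h0Y.add h1Y).const_mul _) ?_
        filter_upwards [volume.ae_ne 0] with ξ hξ
        exact norm_prof2_sq_le u₀ u₁ hl ht hξ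
    _ = 2 * ⌈l + 1⌉₊ ! * (Ysq u₀ (l + 1) + Ysq u₁ l) * t ^ (-(l + 1)) := by
        rw [integral_const_mul, integral_add h0Y h1Y, Ysq, Ysq]
        ring

theorem profile2_L2_upper (n : ℕ) (hn : 1 ≤ n) (l : ℝ) (hl : 0 ≤ l)
    (u₀ u₁ : EuclideanSpace ℝ (Fin n) → ℂ)
    (h0L1 : Integrable u₀) (h1L1 : Integrable u₁)
    (h0Y : MemY u₀ (l + 1)) (h1Y : MemY u₁ l) :
    ∃ C : ℝ, 0 < C ∧ ∀ t > (0:ℝ),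
      (∫ ξ, ‖prof2 u₀ u₁ t ξ‖ ^ 2) ≤
        C * (Ysq u₀ (l + 1) + Ysq u₁ l) * t ^ (-(l + 1)) :=
  profile2_L2_upper_general n hn l hl u₀ u₁ h0Y h1Y
end
end
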